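/- Let (ρ_n) be a sequence of nonnegative functions bounded in L¹(ℝ). Then there exists a subsequence (still denoted ρ_n) satisfying exactly one of: (i) (Vanishing) for every 0 < R < ∞, lim_{n→∞} sup_{y ∈ ℝ} ∫_{y−R}^{y+R} ρ_n(x) dx = 0; or (ii) (Non-vanishing) there exist α > 0, R < ∞ and a sequence (y_n) ⊂ ℝ such that lim inf_{n→∞} ∫_{y_n−R}^{y_n+R} ρ_n(x) dx ≥ α > 0. -/

import Mathlib

/-!
If the whole sequence vanishes there is nothing to extract. Otherwise, for some radius `R` the
concentration function `Q_n(R) = sup_y ∫_{y-R}^{y+R} ρ_n` stays above some `α > 0` along a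
subsequence, and choosing `y_n` that nearly attains the supremum gives non-vanishing. The two
alternatives exclude each other because each window integral is squeezed between `0` and
`Q_n(R)`.
-/

noncomputable section
open MeasureTheory Filter

namespace ConcentrationCompactness

def concentrationFunction (μ : Measure ℝ) (f : ℝ → ℝ) (R : ℝ) : ℝ :=
  ⨆ y : ℝ, ∫ x in Set.Ioo (y - R) (y + R), f x ∂μ

def Vanishing (μ : Measure ℝ) (f : ℕ → ℝ → ℝ) : Prop :=
  ∀ R : ℝ, 0 < R → Tendsto (fun n => concentrationFunction μ (f n) R) atTop (nhds 0)

def NonVanishing (μ : Measure ℝ) (f : ℕ → ℝ → ℝ) : Prop :=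
  ∃ α : ℝ, 0 < α ∧ ∃ R : ℝ, ∃ y : ℕ → ℝ,
    α ≤ atTop.liminf fun n => ∫ x in Set.Ioo (y n - R) (y n + R), f n x ∂μ

variable {μ : Measure ℝ}

section concentrationFunction

variable {f : ℝ → ℝ}

theorem bddAbove_range_setIntegral_Ioo (hf : 0 ≤ f) (hfi : Integrable f μ) (R : ℝ) :
    BddAbove (Set.range fun y : ℝ => ∫ x in Set.Ioo (y - R) (y + R), f x ∂μ) :=
  ⟨∫ x, f x ∂μ, by
    rintro _ ⟨y, rfl⟩
    exact setIntegral_le_integral hfi (ae_of_all _ hf)⟩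

theorem setIntegral_Ioo_le_concentrationFunction (hf : 0 ≤ f) (hfi : Integrable f μ)
    (y R : ℝ) : ∫ x in Set.Ioo (y - R) (y + R), f x ∂μ ≤ concentrationFunction μ f R :=
  le_ciSup (bddAbove_range_setIntegral_Ioo hf hfi R) y

theorem concentrationFunction_nonneg (hf : 0 ≤ f) (hfi : Integrable f μ) (R : ℝ) :
    0 ≤ concentrationFunction μ f R :=
  (setIntegral_nonneg measurableSet_Ioo fun x _ => hf x).trans
    (setIntegral_Ioo_le_concentrationFunction hf hfi 0 R)

end concentrationFunction

variable {f : ℕ → ℝ → ℝ}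

theorem Vanishing.not_nonVanishing (hf : ∀ n, 0 ≤ f n) (hfi : ∀ n, Integrable (f n) μ)
    (hV : Vanishing μ f) : ¬ NonVanishing μ f := by
  rintro ⟨α, hα, R, y, hle⟩
  have hwindow : Tendsto (fun n => ∫ x in Set.Ioo (y n - R) (y n + R), f n x ∂μ)
      atTop (nhds 0) := by
    rcases lt_or_ge 0 R with hR | hR
    · exact tendsto_of_tendsto_of_tendsto_of_le_of_le tendsto_const_nhds (hV R hR)
        (fun n => setIntegral_nonneg measurableSet_Ioo fun x _ => hf n x)
        (fun n => setIntegral_Ioo_le_concentrationFunction (hf n) (hfi n) (y n) R)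
    · refine tendsto_const_nhds.congr fun n => ?_
      rw [Set.Ioo_eq_empty (by linarith), Measure.restrict_empty, integral_zero_measure]
  rw [hwindow.liminf_eq] at hle
  linarith

theorem nonVanishing_of_le_concentrationFunction (hf : ∀ n, 0 ≤ f n)
    (hfi : ∀ n, Integrable (f n) μ) {C : ℝ} (hC : ∀ n, ∫ x, f n x ∂μ ≤ C) {α R : ℝ}
    (hα : 0 < α) (hQ : ∀ n, α ≤ concentrationFunction μ (f n) R) : NonVanishing μ f := by
  have hy : ∀ n, ∃ y : ℝ, α / 2 < ∫ x in Set.Ioo (y - R) (y + R), f n x ∂μ :=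
    fun n => exists_lt_of_lt_ciSup ((half_lt_self hα).trans_le (hQ n))
  choose y hy using hy
  have hbdd : IsBoundedUnder (· ≤ ·) atTop
      fun n => ∫ x in Set.Ioo (y n - R) (y n + R), f n x ∂μ :=
    isBoundedUnder_of ⟨C, fun n =>
      (setIntegral_le_integral (hfi n) (ae_of_all _ (hf n))).trans (hC n)⟩
  exact ⟨α / 2, half_pos hα, R, y,
    le_liminf_of_le hbdd.isCoboundedUnder_ge (Eventually.of_forall fun n => (hy n).le)⟩

theorem exists_strictMono_vanishing_or_nonVanishing (hf : ∀ n, 0 ≤ f n)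
    (hfi : ∀ n, Integrable (f n) μ) {C : ℝ} (hC : ∀ n, ∫ x, f n x ∂μ ≤ C) :
    ∃ φ : ℕ → ℕ, StrictMono φ ∧
      (Vanishing μ (fun n => f (φ n)) ∨ NonVanishing μ (fun n => f (φ n))) := by
  by_cases hV : Vanishing μ f
  · exact ⟨id, strictMono_id, Or.inl hV⟩
  obtain ⟨R, -, hR⟩ : ∃ R : ℝ, 0 < R ∧
      ¬ Tendsto (fun n => concentrationFunction μ (f n) R) atTop (nhds 0) := by
    simpa [Vanishing] using hV
  have hlower : ∀ a < 0, ∀ᶠ n in atTop, a < concentrationFunction μ (f n) R :=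
    fun a ha => Eventually.of_forall fun n =>
      ha.trans_le (concentrationFunction_nonneg (hf n) (hfi n) R)
  simp only [tendsto_order, not_and, not_forall, not_eventually, not_lt] at hR
  obtain ⟨α, hα, hfreq⟩ := hR hlower
  obtain ⟨φ, hφ, hQ⟩ := extraction_of_frequently_atTop hfreq
  exact ⟨φ, hφ, Or.inr <| nonVanishing_of_le_concentrationFunction (fun n => hf (φ n))
    (fun n => hfi (φ n)) (fun n => hC (φ n)) hα hQ⟩

end ConcentrationCompactness

open ConcentrationCompactness in
/-- Lions' concentration-compactness dichotomy (vanishing /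
non-vanishing) for bounded sequences of nonnegative functions in L¹(ℝ). -/
theorem stmt9 (ρ : ℕ → ℝ → ℝ) (hpos : ∀ n x, 0 ≤ ρ n x)
    (hint : ∀ n, Integrable (ρ n)) (C : ℝ) (hbdd : ∀ n, (∫ x, ρ n x) ≤ C) :
    ∃ φ : ℕ → ℕ, StrictMono φ ∧
      Xor'
        (∀ R : ℝ, 0 < R →
          Tendsto (fun n => ⨆ y : ℝ, ∫ x in Set.Ioo (y - R) (y + R), ρ (φ n) x)
            atTop (nhds 0))
        (∃ α : ℝ, 0 < α ∧ ∃ R : ℝ, ∃ y : ℕ → ℝ,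
          α ≤ Filter.atTop.liminf
            (fun n => ∫ x in Set.Ioo (y n - R) (y n + R), ρ (φ n) x)) := by
  obtain ⟨φ, hφ, hVN⟩ := exists_strictMono_vanishing_or_nonVanishing hpos hint hbdd
  have hexcl : Vanishing volume (fun n => ρ (φ n)) → ¬ NonVanishing volume (fun n => ρ (φ n)) :=
    Vanishing.not_nonVanishing (fun n => hpos (φ n)) (fun n => hint (φ n))
  exact ⟨φ, hφ, hVN.imp (fun hV => ⟨hV, hexcl hV⟩) (fun hN => ⟨hN, fun hV => hexcl hV hN⟩)⟩
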